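/- Let H₁ and H₂ be complex Hilbert spaces, X : H₂ → H₁ and Y : H₁ → H₂ bounded linear operators, and let T be the off-diagonal operator matrix on H₁ ⊕ H₂ given by T(x₁, x₂) = (X x₂, Y x₁). Set P = XX* + Y*Y (an operator on H₁). Then w(T)⁴ ≤ (1/16)‖P‖² + (1/4)w(XY)² + (1/8)w((XY)P + P(XY)). -/

import Mathlib

/-!
For a unit vector `x = (x₁, x₂)`, `|⟪T x, x⟫| ≤ |⟪X x₂, x₁⟫| + |⟪Y† x₂, x₁⟫|`, and rotating the two
terms by unimodular scalars `c, d` turns the right side into `⟪Z x₂, x₁⟫ ≤ ‖Z‖ / 2` for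
`Z = c X + d Y†`. Now `Z Z† = P + E` with `E = S + S†`, `S = v XY`, `|v| = 1`, so by the C⋆-identity
`‖Z‖⁴ = ‖(P + E)²‖ ≤ ‖P‖² + ‖PE + EP‖ + ‖E‖²`, and `PE + EP = W + W†` with `W = v (XY P + P XY)`.
An operator of the form `S + S†` is self-adjoint, so its norm is at most its numerical radius,
which is at most `2 w(S)`.
-/

noncomputable def numRadius {H : Type*} [NormedAddCommGroup H] [InnerProductSpace ℂ H]
    (T : H →L[ℂ] H) : ℝ :=
  sSup {r : ℝ | ∃ x : H, ‖x‖ = 1 ∧ r = ‖(inner ℂ (T x) x : ℂ)‖}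

open scoped InnerProductSpace ComplexConjugate
open ContinuousLinearMap

lemma IsSelfAdjoint.norm_add_sq_le {A : Type*} [NonUnitalNormedRing A] [StarRing A]
    [CStarRing A] {a b : A} (ha : IsSelfAdjoint a) (hb : IsSelfAdjoint b) :
    ‖a + b‖ ^ 2 ≤ ‖a‖ ^ 2 + ‖a * b + b * a‖ + ‖b‖ ^ 2 := by
  rw [← (ha.add hb).norm_mul_self, ← ha.norm_mul_self, ← hb.norm_mul_self,
    show (a + b) * (a + b) = a * a + (a * b + b * a) + b * b by noncomm_ring]
  exact norm_add₃_le

lemma IsSelfAdjoint.mul_add_star_add_add_star_mul {A : Type*} [NonUnitalRing A] [StarRing A]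
    {p : A} (hp : IsSelfAdjoint p) (a : A) :
    p * (a + star a) + (a + star a) * p = (a * p + p * a) + star (a * p + p * a) := by
  simp only [star_add, star_mul, hp.star_eq, mul_add, add_mul]
  abel

section NumRadius

variable {H : Type*} [NormedAddCommGroup H] [InnerProductSpace ℂ H]

lemma numRadius_bddAbove (T : H →L[ℂ] H) :
    BddAbove {r : ℝ | ∃ x : H, ‖x‖ = 1 ∧ r = ‖⟪T x, x⟫_ℂ‖} := by
  refine ⟨‖T‖, ?_⟩
  rintro _ ⟨x, hx, rfl⟩
  exact (norm_inner_le_norm _ _).trans (by simpa [hx] using T.le_opNorm x)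

lemma numRadius_nonneg (T : H →L[ℂ] H) : 0 ≤ numRadius T :=
  Real.sSup_nonneg (by rintro _ ⟨x, -, rfl⟩; positivity)

lemma norm_inner_le_numRadius (T : H →L[ℂ] H) {x : H} (hx : ‖x‖ = 1) :
    ‖⟪T x, x⟫_ℂ‖ ≤ numRadius T :=
  le_csSup (numRadius_bddAbove T) ⟨x, hx, rfl⟩

lemma numRadius_le_of_forall (T : H →L[ℂ] H) {M : ℝ} (hM : 0 ≤ M)
    (h : ∀ x : H, ‖x‖ = 1 → ‖⟪T x, x⟫_ℂ‖ ≤ M) : numRadius T ≤ M :=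
  Real.sSup_le (by rintro _ ⟨x, hx, rfl⟩; exact h x hx) hM

lemma numRadius_pow_le_of_forall (T : H →L[ℂ] H) {n : ℕ} (hn : n ≠ 0) {B : ℝ} (hB : 0 ≤ B)
    (h : ∀ x : H, ‖x‖ = 1 → ‖⟪T x, x⟫_ℂ‖ ^ n ≤ B) : numRadius T ^ n ≤ B := by
  have hroot : numRadius T ≤ B ^ (n⁻¹ : ℝ) := by
    refine numRadius_le_of_forall T (by positivity) fun x hx => ?_
    rw [← Real.pow_rpow_inv_natCast (norm_nonneg ⟪T x, x⟫_ℂ) hn]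
    exact Real.rpow_le_rpow (by positivity) (h x hx) (by positivity)
  calc numRadius T ^ n ≤ (B ^ (n⁻¹ : ℝ)) ^ n := by gcongr; exact numRadius_nonneg T
    _ = B := Real.rpow_inv_natCast_pow hB hn

lemma numRadius_smul_le (c : ℂ) (T : H →L[ℂ] H) : numRadius (c • T) ≤ ‖c‖ * numRadius T := by
  refine numRadius_le_of_forall _ (by have := numRadius_nonneg T; positivity) fun x hx => ?_
  rw [smul_apply, inner_smul_left, norm_mul, RCLike.norm_conj]
  gcongr
  exact norm_inner_le_numRadius T hx

lemma abs_rayleighQuotient_le_numRadius (T : H →L[ℂ] H) (x : H) :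
    |T.rayleighQuotient x| ≤ numRadius T := by
  rcases eq_or_ne x 0 with rfl | hx
  · simpa using numRadius_nonneg T
  have hu : ‖(‖x‖⁻¹ : ℂ) • x‖ = 1 := by
    simp [norm_smul, hx]
  rw [← T.rayleigh_smul x (c := (‖x‖⁻¹ : ℂ)) (by simpa using hx), rayleighQuotient,
    hu, one_pow, div_one, reApplyInnerSelf_apply]
  exact (RCLike.abs_re_le_norm _).trans (norm_inner_le_numRadius T hu)

variable [CompleteSpace H]

lemma IsSelfAdjoint.norm_le_numRadius {S : H →L[ℂ] H} (hS : IsSelfAdjoint S) :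
    ‖S‖ ≤ numRadius S := by
  rw [S.norm_eq_iSup_rayleighQuotient hS.isSymmetric]
  exact ciSup_le (abs_rayleighQuotient_le_numRadius S)

lemma numRadius_add_star_le (T : H →L[ℂ] H) : numRadius (T + star T) ≤ 2 * numRadius T := by
  refine numRadius_le_of_forall _ (by have := numRadius_nonneg T; positivity) fun x hx => ?_
  rw [add_apply, inner_add_left, star_eq_adjoint, adjoint_inner_left, ← inner_conj_symm x (T x)]
  calc ‖⟪T x, x⟫_ℂ + conj ⟪T x, x⟫_ℂ‖ ≤ ‖⟪T x, x⟫_ℂ‖ + ‖⟪T x, x⟫_ℂ‖ :=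
        (norm_add_le _ _).trans_eq (by rw [RCLike.norm_conj])
    _ ≤ 2 * numRadius T := by linarith [norm_inner_le_numRadius T hx]

lemma norm_add_star_le_two_mul_numRadius (T : H →L[ℂ] H) : ‖T + star T‖ ≤ 2 * numRadius T :=
  (IsSelfAdjoint.add_star_self T).norm_le_numRadius.trans (numRadius_add_star_le T)

end NumRadius

section OffDiagonal

variable {E F : Type*} [NormedAddCommGroup E] [InnerProductSpace ℂ E]
  [NormedAddCommGroup F] [InnerProductSpace ℂ F]

lemma exists_norm_inner_add_norm_inner_le (A B : E →L[ℂ] F) (u : E) (w : F) :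
    ∃ c d : ℂ, ‖c‖ = 1 ∧ ‖d‖ = 1 ∧
      ‖⟪A u, w⟫_ℂ‖ + ‖⟪B u, w⟫_ℂ‖ ≤ ‖c • A + d • B‖ * ‖u‖ * ‖w‖ := by
  obtain ⟨c, hc, hca⟩ := Complex.exists_norm_eq_mul_self ⟪A u, w⟫_ℂ
  obtain ⟨d, hd, hdb⟩ := Complex.exists_norm_eq_mul_self ⟪B u, w⟫_ℂ
  set S := conj c • A + conj d • B
  have hsum : ⟪S u, w⟫_ℂ = ((‖⟪A u, w⟫_ℂ‖ + ‖⟪B u, w⟫_ℂ‖ : ℝ) : ℂ) := by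
    rw [add_apply, smul_apply, smul_apply, inner_add_left, inner_smul_left, inner_smul_left,
      RCLike.conj_conj, RCLike.conj_conj, Complex.ofReal_add, hca, hdb]
  refine ⟨conj c, conj d, by rwa [RCLike.norm_conj], by rwa [RCLike.norm_conj], ?_⟩
  calc ‖⟪A u, w⟫_ℂ‖ + ‖⟪B u, w⟫_ℂ‖ = ‖⟪S u, w⟫_ℂ‖ := by
        rw [hsum, Complex.norm_real, Real.norm_of_nonneg (by positivity)]
    _ ≤ ‖S u‖ * ‖w‖ := norm_inner_le_norm _ _
    _ ≤ ‖S‖ * ‖u‖ * ‖w‖ := by gcongr; exact le_opNorm _ _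

variable [CompleteSpace E] [CompleteSpace F]

lemma norm_inner_offDiag_le (X : F →L[ℂ] E) (Y : E →L[ℂ] F)
    (T : WithLp 2 (E × F) →L[ℂ] WithLp 2 (E × F))
    (hT : ∀ x : WithLp 2 (E × F),
      WithLp.equiv 2 (E × F) (T x) =
        (X (WithLp.equiv 2 (E × F) x).2, Y (WithLp.equiv 2 (E × F) x).1))
    {x : WithLp 2 (E × F)} (hx : ‖x‖ = 1) :
    ∃ c d : ℂ, ‖c‖ = 1 ∧ ‖d‖ = 1 ∧ ‖⟪T x, x⟫_ℂ‖ ≤ ‖c • X + d • adjoint Y‖ / 2 := by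
  obtain ⟨c, d, hc, hd, hcd⟩ := exists_norm_inner_add_norm_inner_le X (adjoint Y) x.snd x.fst
  refine ⟨c, d, hc, hd, ?_⟩
  have hTx : ⟪T x, x⟫_ℂ = ⟪X x.snd, x.fst⟫_ℂ + conj ⟪adjoint Y x.snd, x.fst⟫_ℂ := by
    rw [WithLp.prod_inner_apply, adjoint_inner_left, inner_conj_symm]
    exact congrArg₂ (⟪·.1, x.fst⟫_ℂ + ⟪·.2, x.snd⟫_ℂ) (hT x) (hT x)
  have hnorm : ‖x.fst‖ ^ 2 + ‖x.snd‖ ^ 2 = 1 := by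
    rw [← WithLp.prod_norm_sq_eq_of_L2, hx, one_pow]
  calc ‖⟪T x, x⟫_ℂ‖ ≤ ‖⟪X x.snd, x.fst⟫_ℂ‖ + ‖⟪adjoint Y x.snd, x.fst⟫_ℂ‖ := by
        rw [hTx, ← RCLike.norm_conj ⟪adjoint Y x.snd, x.fst⟫_ℂ]
        exact norm_add_le _ _
    _ ≤ ‖c • X + d • adjoint Y‖ * ‖x.snd‖ * ‖x.fst‖ := hcd
    _ ≤ ‖c • X + d • adjoint Y‖ / 2 := by
        rw [mul_assoc]
        nlinarith [sq_nonneg (‖x.fst‖ - ‖x.snd‖), norm_nonneg (c • X + d • adjoint Y)]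

lemma smul_add_smul_adjoint_comp_adjoint (X : F →L[ℂ] E) (Y : E →L[ℂ] F) {c d : ℂ}
    (hc : ‖c‖ = 1) (hd : ‖d‖ = 1) :
    (c • X + d • adjoint Y) ∘L adjoint (c • X + d • adjoint Y)
      = (X ∘L adjoint X + adjoint Y ∘L Y)
        + ((c * conj d) • (X ∘L Y) + star ((c * conj d) • (X ∘L Y))) := by
  have hcc : conj c * c = 1 := by rw [RCLike.conj_mul, hc]; norm_num
  have hdd : conj d * d = 1 := by rw [RCLike.conj_mul, hd]; norm_num
  simp only [map_add, map_smulₛₗ, adjoint_adjoint, star_eq_adjoint, adjoint_comp, add_comp,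
    comp_add, smul_comp, comp_smul, map_mul, RCLike.conj_conj, smul_add, smul_smul, hcc, hdd,
    one_smul]
  module

lemma norm_smul_add_smul_adjoint_pow_four_le (X : F →L[ℂ] E) (Y : E →L[ℂ] F) {P : E →L[ℂ] E}
    (hP : P = X ∘L adjoint X + adjoint Y ∘L Y) {c d : ℂ} (hc : ‖c‖ = 1) (hd : ‖d‖ = 1) :
    ‖c • X + d • adjoint Y‖ ^ 4 ≤ ‖P‖ ^ 2 + 4 * numRadius (X ∘L Y) ^ 2
      + 2 * numRadius ((X ∘L Y) ∘L P + P ∘L (X ∘L Y)) := by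
  set D := X ∘L Y
  set Z := c • X + d • adjoint Y
  set v := c * conj d
  have hv : ‖v‖ = 1 := by rw [norm_mul, RCLike.norm_conj, hc, hd, one_mul]
  have hP_sa : IsSelfAdjoint P := by
    rw [hP, IsSelfAdjoint, star_add, star_eq_adjoint, star_eq_adjoint, adjoint_comp,
      adjoint_comp, adjoint_adjoint, adjoint_adjoint]
  have hZ : ‖Z‖ ^ 2 = ‖P + (v • D + star (v • D))‖ := by
    have h := norm_adjoint_comp_self (adjoint Z)
    rw [adjoint_adjoint, LinearIsometryEquiv.norm_map,
      smul_add_smul_adjoint_comp_adjoint X Y hc hd, ← hP] at h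
    rw [sq, ← h]
  have hE : ‖v • D + star (v • D)‖ ≤ 2 * numRadius D := by
    calc _ ≤ 2 * numRadius (v • D) := norm_add_star_le_two_mul_numRadius _
      _ ≤ 2 * numRadius D := by grw [numRadius_smul_le, hv, one_mul]
  have hcross : ‖P * (v • D + star (v • D)) + (v • D + star (v • D)) * P‖
      ≤ 2 * numRadius (D ∘L P + P ∘L D) := by
    rw [hP_sa.mul_add_star_add_add_star_mul, smul_mul_assoc, mul_smul_comm, ← smul_add]
    calc _ ≤ 2 * numRadius (v • (D * P + P * D)) := norm_add_star_le_two_mul_numRadius _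
      _ ≤ 2 * numRadius (D ∘L P + P ∘L D) := by grw [numRadius_smul_le, hv, one_mul]; rfl
  calc ‖Z‖ ^ 4 = ‖P + (v • D + star (v • D))‖ ^ 2 := by rw [← hZ, ← pow_mul]
    _ ≤ ‖P‖ ^ 2 + ‖P * (v • D + star (v • D)) + (v • D + star (v • D)) * P‖
          + ‖v • D + star (v • D)‖ ^ 2 :=
        hP_sa.norm_add_sq_le (IsSelfAdjoint.add_star_self _)
    _ ≤ ‖P‖ ^ 2 + 2 * numRadius (D ∘L P + P ∘L D) + (2 * numRadius D) ^ 2 := by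
        gcongr
    _ = _ := by ring

end OffDiagonal

theorem numRadius_offdiag_pow_four_upper'
    {H₁ H₂ : Type*} [NormedAddCommGroup H₁] [InnerProductSpace ℂ H₁]
    [NormedAddCommGroup H₂] [InnerProductSpace ℂ H₂]
    [CompleteSpace H₁] [CompleteSpace H₂]
    (X : H₂ →L[ℂ] H₁) (Y : H₁ →L[ℂ] H₂)
    (T : WithLp 2 (H₁ × H₂) →L[ℂ] WithLp 2 (H₁ × H₂))
    (hT : ∀ x : WithLp 2 (H₁ × H₂),
      WithLp.equiv 2 (H₁ × H₂) (T x) =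
        (X (WithLp.equiv 2 (H₁ × H₂) x).2, Y (WithLp.equiv 2 (H₁ × H₂) x).1))
    (P : H₁ →L[ℂ] H₁)
    (hP : P = X.comp (ContinuousLinearMap.adjoint X) + (ContinuousLinearMap.adjoint Y).comp Y) :
    (numRadius T) ^ 4 ≤ (1 / 16 : ℝ) * ‖P‖ ^ 2 + (1 / 4 : ℝ) * (numRadius (X.comp Y)) ^ 2
      + (1 / 8 : ℝ) * numRadius ((X.comp Y).comp P + P.comp (X.comp Y)) := by
  have hB : 0 ≤ (1 / 16 : ℝ) * ‖P‖ ^ 2 + (1 / 4 : ℝ) * (numRadius (X.comp Y)) ^ 2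
      + (1 / 8 : ℝ) * numRadius ((X.comp Y).comp P + P.comp (X.comp Y)) := by
    have := numRadius_nonneg ((X.comp Y).comp P + P.comp (X.comp Y))
    positivity
  refine numRadius_pow_le_of_forall T four_ne_zero hB fun x hx => ?_
  obtain ⟨c, d, hc, hd, hTx⟩ := norm_inner_offDiag_le X Y T hT hx
  have hZ := norm_smul_add_smul_adjoint_pow_four_le X Y hP hc hd
  calc ‖⟪T x, x⟫_ℂ‖ ^ 4 ≤ (‖c • X + d • adjoint Y‖ / 2) ^ 4 := by gcongr
    _ ≤ _ := by linarith
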